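/- The softmax function softmax : ℝ^K → ℝ^K, defined by softmax(z)_k = e^{z_k} / Σ_{j=1}^K e^{z_j}, is Lipschitz continuous with Lipschitz constant 1 with respect to the Euclidean norm: for all z, z' ∈ ℝ^K, ‖softmax(z) − softmax(z')‖₂ ≤ ‖z − z'‖₂. -/

import Mathlib

/-!
Along the segment `γ t = z' + t • b`, `b = z - z'`, the derivative of `softmax ∘ γ` is `J b` with
`(J b)_k = p_k (b_k - ⟨p, b⟩)`, where `p = softmax (γ t)` is a probability vector. Since
`0 ≤ p_k ≤ 1`, `‖J b‖² ≤ ∑ p_k (b_k - ⟨p, b⟩)² ≤ ∑ p_k b_k² ≤ ‖b‖²`, and the mean value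
inequality on `[0, 1]` gives the claim.
-/

open scoped BigOperators

/-- Euclidean (ℓ2) norm of a vector in `ℝ^d`. -/
noncomputable def norm2 {d : ℕ} (x : Fin d → ℝ) : ℝ := Real.sqrt (∑ j, x j ^ 2)

/-- The softmax function `softmax(z)_k = e^{z_k} / Σ_j e^{z_j}`. -/
noncomputable def softmax {K : ℕ} (z : Fin K → ℝ) : Fin K → ℝ :=
  fun k => Real.exp (z k) / ∑ j, Real.exp (z j)

open Finset

section SubProbability

variable {ι : Type*} [Fintype ι] {p : ι → ℝ}

theorem sum_mul_sq_sub_weightedMean_le (hp : ∑ i, p i ≤ 1) (v : ι → ℝ) :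
    ∑ i, p i * (v i - ∑ j, p j * v j) ^ 2 ≤ ∑ i, p i * v i ^ 2 := by
  set m := ∑ j, p j * v j
  have hexpand : ∑ i, p i * (v i - m) ^ 2 = ∑ i, p i * v i ^ 2 - (2 - ∑ i, p i) * m ^ 2 := by
    have hpt (i : ι) : p i * (v i - m) ^ 2 = p i * v i ^ 2 - 2 * m * (p i * v i) + m ^ 2 * p i := by
      ring
    simp only [hpt, sum_add_distrib, sum_sub_distrib, ← mul_sum]
    ring
  rw [hexpand]
  nlinarith [sq_nonneg m]

theorem sum_sq_mul_sub_weightedMean_le (hp0 : ∀ i, 0 ≤ p i) (hp1 : ∑ i, p i ≤ 1) (v : ι → ℝ) :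
    ∑ i, (p i * (v i - ∑ j, p j * v j)) ^ 2 ≤ ∑ i, v i ^ 2 := by
  have hp_le_one (i : ι) : p i ≤ 1 := (single_le_sum (fun j _ => hp0 j) (mem_univ i)).trans hp1
  calc ∑ i, (p i * (v i - ∑ j, p j * v j)) ^ 2
      ≤ ∑ i, p i * (v i - ∑ j, p j * v j) ^ 2 := by
        gcongr with i
        rw [mul_pow]
        gcongr
        nlinarith [hp0 i, hp_le_one i]
    _ ≤ ∑ i, p i * v i ^ 2 := sum_mul_sq_sub_weightedMean_le hp1 v
    _ ≤ ∑ i, v i ^ 2 := by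
        gcongr with i
        exact mul_le_of_le_one_left (sq_nonneg _) (hp_le_one i)

end SubProbability

/-- The Jacobian `diag p - p pᵀ` of softmax at `z`, `p = softmax z`, applied to `v`. -/
noncomputable def softmaxDeriv {K : ℕ} (z v : Fin K → ℝ) : Fin K → ℝ :=
  fun k => softmax z k * (v k - ∑ j, softmax z j * v j)

theorem softmax_nonneg {K : ℕ} (z : Fin K → ℝ) (k : Fin K) : 0 ≤ softmax z k :=
  div_nonneg (Real.exp_pos _).le (sum_nonneg fun _ _ => (Real.exp_pos _).le)

theorem sum_softmax_le_one {K : ℕ} (z : Fin K → ℝ) : ∑ k, softmax z k ≤ 1 := by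
  simp only [softmax, ← sum_div]
  exact div_self_le_one _

theorem norm2_softmaxDeriv_le {K : ℕ} (z v : Fin K → ℝ) : norm2 (softmaxDeriv z v) ≤ norm2 v :=
  Real.sqrt_le_sqrt (sum_sq_mul_sub_weightedMean_le (softmax_nonneg z) (sum_softmax_le_one z) v)

theorem norm2_eq_norm_toLp {d : ℕ} (x : Fin d → ℝ) :
    norm2 x = ‖(WithLp.toLp 2 x : EuclideanSpace ℝ (Fin d))‖ := by
  simp [norm2, EuclideanSpace.norm_eq]

theorem hasDerivAt_softmax_line {K : ℕ} (z v : Fin K → ℝ) (k : Fin K) (t : ℝ) :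
    HasDerivAt (fun s : ℝ => softmax (z + s • v) k) (softmaxDeriv (z + t • v) v k) t := by
  have hexp (j : Fin K) : HasDerivAt (fun s => Real.exp (z j + s * v j))
      (Real.exp (z j + t * v j) * v j) t := by
    simpa using (((hasDerivAt_id t).mul_const (v j)).const_add (z j)).exp
  have hsum : HasDerivAt (fun s => ∑ j, Real.exp (z j + s * v j))
      (∑ j, Real.exp (z j + t * v j) * v j) t := HasDerivAt.fun_sum fun j _ => hexp j
  have hpos : 0 < ∑ j, Real.exp (z j + t * v j) :=
    sum_pos (fun j _ => Real.exp_pos _) ⟨k, mem_univ k⟩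
  refine ((hexp k).div hsum hpos.ne').congr_deriv ?_
  simp only [softmaxDeriv, softmax, Pi.add_apply, Pi.smul_apply, smul_eq_mul, div_mul_eq_mul_div,
    ← sum_div]
  field_simp

theorem hasDerivAt_toLp_softmax_line {K : ℕ} (z v : Fin K → ℝ) (t : ℝ) :
    HasDerivAt (fun s : ℝ => (WithLp.toLp 2 (softmax (z + s • v)) : EuclideanSpace ℝ (Fin K)))
      (WithLp.toLp 2 (softmaxDeriv (z + t • v) v)) t :=
  (EuclideanSpace.equiv (Fin K) ℝ).symm.hasFDerivAt.comp_hasDerivAt t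
    (hasDerivAt_pi.2 fun k => hasDerivAt_softmax_line z v k t)

theorem softmax_lipschitz_one_general {K : ℕ} (z z' : Fin K → ℝ) :
    norm2 (fun k => softmax z k - softmax z' k) ≤ norm2 (fun k => z k - z' k) := by
  have key := norm_image_sub_le_of_norm_deriv_le_segment_01'
    (fun t _ => (hasDerivAt_toLp_softmax_line z' (z - z') t).hasDerivWithinAt)
    (fun t _ => (norm2_eq_norm_toLp _).symm.trans_le (norm2_softmaxDeriv_le _ (z - z')))
  show norm2 (softmax z - softmax z') ≤ norm2 (z - z')
  rw [norm2_eq_norm_toLp (softmax z - softmax z')]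
  simpa using key

/-- Softmax is 1-Lipschitz with respect to the Euclidean norm:
`‖softmax(z) − softmax(z')‖₂ ≤ ‖z − z'‖₂`. -/
theorem softmax_lipschitz_one {K : ℕ} (hK : 0 < K) (z z' : Fin K → ℝ) :
    norm2 (fun k => softmax z k - softmax z' k) ≤ norm2 (fun k => z k - z' k) :=
  softmax_lipschitz_one_general z z'
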